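/- arXiv:1205.6507 — 7 statements merged into one kernel-verified Lean document; each statement's English description precedes it below -/
import Mathlib

section
/- Let K > 0, n ≥ 2, α > 0, and let φ solve φ'(t) = -2K(n-1) - (α/φ(t))K²(n-1) with φ(0) = 1. Then φ reaches 0 at the finite time T = 1/(2K(n-1)) + (α/(4(n-1)))·ln(αK/(2+αK)), and since αK/(2+αK) < 1, this T is strictly less than 1/(2K(n-1)), the extinction time for the Ricci flow (α = 0) case. -/
/-!
Writing `a = αK` and `c = K(n-1)`, the equation reads `φ' = -c (2φ + a) / φ`. It separates:
with the potential `P(y) = y/2 - (a/4) log (2y + a)`, whose derivative is `y / (2y + a)`,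
`P ∘ φ` decreases at the constant rate `c`. Since `P` is strictly increasing on `[0, ∞)` and the
formula for `T` says exactly `c T = P 1 - P 0`, the solution reaches `0` at time `T`.
-/

open Set

namespace RG2

noncomputable def potential (a y : ℝ) : ℝ := y / 2 - a / 4 * Real.log (2 * y + a)

variable {a : ℝ}

theorem hasDerivAt_potential {y : ℝ} (hy : 0 < 2 * y + a) :
    HasDerivAt (potential a) (y / (2 * y + a)) y := by
  have hlin : HasDerivAt (fun y : ℝ => 2 * y + a) 2 y := by
    simpa using ((hasDerivAt_id y).const_mul 2).add_const a
  have hlog := (hlin.log hy.ne').const_mul (a / 4)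
  refine (((hasDerivAt_id' y).div_const 2).sub hlog).congr_deriv ?_
  field_simp
  ring

theorem continuousOn_potential (ha : 0 < a) : ContinuousOn (potential a) (Ici 0) :=
  fun y hy => (hasDerivAt_potential (by simp only [mem_Ici] at hy; linarith)).continuousAt
    |>.continuousWithinAt

theorem strictMonoOn_potential (ha : 0 < a) : StrictMonoOn (potential a) (Ici 0) := by
  refine strictMonoOn_of_deriv_pos (convex_Ici 0) (continuousOn_potential ha) fun y hy => ?_
  rw [interior_Ici, mem_Ioi] at hy
  rw [(hasDerivAt_potential (by linarith)).deriv]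
  positivity

theorem nonneg_of_continuousOn_Icc_of_pos_Ico {f : ℝ → ℝ} {s T : ℝ} (hsT : s < T)
    (hcont : ContinuousOn f (Icc s T)) (hpos : ∀ t ∈ Ico s T, 0 < f t) :
    ∀ t ∈ Icc s T, 0 ≤ f t := by
  have hclosed : IsClosed (Icc s T ∩ f ⁻¹' Ici 0) :=
    hcont.preimage_isClosed_of_isClosed isClosed_Icc isClosed_Ici
  have hsub : Ico s T ⊆ Icc s T ∩ f ⁻¹' Ici 0 :=
    fun t ht => ⟨Ico_subset_Icc_self ht, (hpos t ht).le⟩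
  intro t ht
  rw [← closure_Ico hsT.ne] at ht
  exact (hclosed.closure_subset_iff.mpr hsub ht).2

variable {c T : ℝ} {φ : ℝ → ℝ}

theorem potential_comp_eq (ha : 0 < a)
    (hcont : ContinuousOn φ (Icc 0 T)) (hnonneg : ∀ t ∈ Icc 0 T, 0 ≤ φ t)
    (hpos : ∀ t ∈ Ico 0 T, 0 < φ t)
    (hode : ∀ t ∈ Ico 0 T, HasDerivAt φ (-c * (2 * φ t + a) / φ t) t) :
    ∀ t ∈ Icc 0 T, potential a (φ t) = potential a (φ 0) - c * t := by
  refine eq_of_has_deriv_right_eq (f' := fun _ => -c) (fun t ht => ?_)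
    (fun t _ => ((hasDerivAt_id t).const_mul c).const_sub _ |>.hasDerivWithinAt |>.congr_deriv
      (by simp))
    ((continuousOn_potential ha).comp hcont hnonneg)
    (by fun_prop) (by simp)
  have hφ := hpos t ht
  have hchain := (hasDerivAt_potential (a := a) (by linarith)).comp t (hode t ht)
  refine hchain.hasDerivWithinAt.congr_deriv ?_
  field_simp

theorem eq_zero_of_hasDerivAt_of_mul_eq_potential_sub (ha : 0 < a) (hT : 0 < T)
    (hcont : ContinuousOn φ (Icc 0 T)) (hpos : ∀ t ∈ Ico 0 T, 0 < φ t)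
    (hode : ∀ t ∈ Ico 0 T, HasDerivAt φ (-c * (2 * φ t + a) / φ t) t)
    (hcT : c * T = potential a (φ 0) - potential a 0) :
    φ T = 0 := by
  have hnonneg := nonneg_of_continuousOn_Icc_of_pos_Ico hT hcont hpos
  have hTmem : T ∈ Icc 0 T := right_mem_Icc.mpr hT.le
  have hP : potential a (φ T) = potential a 0 := by
    rw [potential_comp_eq ha hcont hnonneg hpos hode T hTmem, hcT, sub_sub_cancel]
  exact (strictMonoOn_potential ha).injOn (hnonneg T hTmem) (mem_Ici.mpr le_rfl) hP

end RG2

/-- For `K > 0`, `α > 0`, the RG-2 conformal factor reaches `0` at the finite time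
`T = 1/(2K(n-1)) + (α/(4(n-1))) ln(αK/(2+αK))`, and since `αK/(2+αK) < 1` this `T` is
strictly less than the Ricci flow extinction time `1/(2K(n-1))`. -/
theorem rg2_positive_curvature_extinction_time
    (K : ℝ) (n : ℕ) (α T : ℝ) (φ : ℝ → ℝ)
    (hK : 0 < K) (hn : 2 ≤ n) (hα : 0 < α)
    (hT : T = 1/(2*K*((n:ℝ)-1)) + (α/(4*((n:ℝ)-1))) * Real.log (α*K/(2+α*K)))
    (hφ0 : φ 0 = 1)
    (hcont : ContinuousOn φ (Icc 0 T))
    (hpos : ∀ t ∈ Ico (0:ℝ) T, 0 < φ t)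
    (hode : ∀ t ∈ Ico (0:ℝ) T,
      HasDerivAt φ (-2*K*((n:ℝ)-1) - (α/φ t)*K^2*((n:ℝ)-1)) t) :
    φ T = 0 ∧ α*K/(2+α*K) < 1 ∧ T < 1/(2*K*((n:ℝ)-1)) := by
  have hm : 0 < (n:ℝ) - 1 := by
    have : (2:ℝ) ≤ n := by exact_mod_cast hn
    linarith
  have ha : 0 < α * K := mul_pos hα hK
  have hc : 0 < K * ((n:ℝ) - 1) := mul_pos hK hm
  have hratio : α*K/(2+α*K) < 1 := (div_lt_one (by linarith)).mpr (by linarith)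
  have hcT : K * ((n:ℝ) - 1) * T = RG2.potential (α*K) (φ 0) - RG2.potential (α*K) 0 := by
    rw [hT, hφ0, RG2.potential, RG2.potential, Real.log_div ha.ne' (by linarith)]
    field_simp
    ring_nf
  have hTpos : 0 < T := by
    have hP : RG2.potential (α*K) 0 < RG2.potential (α*K) (φ 0) := by
      rw [hφ0]
      exact RG2.strictMonoOn_potential ha (mem_Ici.mpr le_rfl) (mem_Ici.mpr zero_le_one) zero_lt_one
    exact pos_of_mul_pos_right (hcT ▸ sub_pos.mpr hP) hc.le
  have hode' : ∀ t ∈ Ico (0:ℝ) T,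
      HasDerivAt φ (-(K * ((n:ℝ) - 1)) * (2 * φ t + α*K) / φ t) t := fun t ht => by
    convert hode t ht using 1
    field_simp [(hpos t ht).ne']
    ring
  refine ⟨RG2.eq_zero_of_hasDerivAt_of_mul_eq_potential_sub ha hTpos hcont hpos hode' hcT,
    hratio, ?_⟩
  have hlog : Real.log (α*K/(2+α*K)) < 0 := Real.log_neg (by positivity) hratio
  rw [hT]
  nlinarith [div_pos hα (by linarith : (0:ℝ) < 4*((n:ℝ)-1))]
end

section
/- Let K < 0, n ≥ 2, α > 0, and let φ solve φ'(t) = -2K(n-1) - (α/φ(t))K²(n-1) with φ(0) = 1. If |K| < 2/α then φ'(0) > 0 and φ is strictly increasing for all t, and the solution exists for all t ≥ 0; if |K| > 2/α then φ'(0) < 0 and φ is strictly decreasing, reaching 0 in finite time. -/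
/-!
Write `a = -2K(n-1) > 0` and `b = αK²(n-1) > 0`, so that the equation is `φ' = a - b/φ`.
Separating variables, `τ(y) = y/a + (b/a²) log|a y - b|` satisfies `τ' = 1/(a - b/y)`, hence
`φ(t) = τ⁻¹(τ(1) + t)`. The equilibrium `b/a` lies below `1` exactly when `|K| < 2/α`: then `τ`
is an increasing bijection from `(b/a, ∞)` onto `ℝ` and `φ` is immortal. Otherwise `τ` decreases
from `[0, b/a)` onto `(-∞, τ(0)]`, and `φ` reaches `0` at the finite time `τ(0) - τ(1)`.
-/

open Set Filter Function Topology

section InverseOfMonotone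

variable {α β : Type*} [LinearOrder α] [LinearOrder β] [Nonempty α] {f : α → β} {s : Set α}

theorem StrictMonoOn.strictMonoOn_invFunOn (hf : StrictMonoOn f s) :
    StrictMonoOn (invFunOn f s) (f '' s) := by
  rintro _ ⟨x, hx, rfl⟩ _ ⟨y, hy, rfl⟩ hxy
  rw [hf.injOn.leftInvOn_invFunOn hx, hf.injOn.leftInvOn_invFunOn hy]
  exact (hf.lt_iff_lt hx hy).1 hxy

theorem StrictAntiOn.strictAntiOn_invFunOn (hf : StrictAntiOn f s) :
    StrictAntiOn (invFunOn f s) (f '' s) := fun _ ha _ hb hab =>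
  StrictMonoOn.strictMonoOn_invFunOn (β := βᵒᵈ) hf hb ha hab

variable [DenselyOrdered α] [TopologicalSpace β] [OrderTopology β]

theorem StrictMonoOn.eventually_invFunOn_lt (hs : s.OrdConnected) (hf : StrictMonoOn f s)
    {x u : α} (hx : x ∈ s) (hxu : x < u) :
    ∀ᶠ w in 𝓝[f '' s] (f x), invFunOn f s w < u := by
  have hleft := hf.injOn.leftInvOn_invFunOn
  by_cases hy : ∃ y ∈ s, x < y
  · obtain ⟨y, hy, hxy⟩ := hy
    obtain ⟨c, hxc, hc⟩ := exists_between (lt_min hxu hxy)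
    have hcs : c ∈ s := hs.out hx hy ⟨hxc.le, hc.le.trans (min_le_right _ _)⟩
    have hlt : ∀ᶠ w in 𝓝[f '' s] (f x), w < f c :=
      mem_nhdsWithin_of_mem_nhds (Iio_mem_nhds (hf hx hcs hxc))
    filter_upwards [hlt, self_mem_nhdsWithin] with w hw ⟨v, hv, hvw⟩
    subst hvw
    rw [hleft hv]
    exact ((hf.lt_iff_lt hv hcs).1 hw).trans (hc.trans_le (min_le_left _ _))
  · simp only [not_exists, not_and, not_lt] at hy
    filter_upwards [self_mem_nhdsWithin] with w ⟨v, hv, hvw⟩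
    subst hvw
    rw [hleft hv]
    exact (hy v hv).trans_lt hxu

variable [TopologicalSpace α] [OrderTopology α]

theorem StrictMonoOn.continuousWithinAt_invFunOn (hs : s.OrdConnected) (hf : StrictMonoOn f s)
    {z : β} (hz : z ∈ f '' s) : ContinuousWithinAt (invFunOn f s) (f '' s) z := by
  obtain ⟨x, hx, rfl⟩ := hz
  rw [ContinuousWithinAt, hf.injOn.leftInvOn_invFunOn hx]
  -- the lower bound is the upper bound for the order duals
  exact tendsto_order.2 ⟨fun l hl => StrictMonoOn.eventually_invFunOn_lt (α := αᵒᵈ) (β := βᵒᵈ)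
    hs.dual hf.dual hx hl, fun u hu => hf.eventually_invFunOn_lt hs hx hu⟩

theorem StrictAntiOn.continuousWithinAt_invFunOn (hs : s.OrdConnected) (hf : StrictAntiOn f s)
    {z : β} (hz : z ∈ f '' s) : ContinuousWithinAt (invFunOn f s) (f '' s) z :=
  StrictMonoOn.continuousWithinAt_invFunOn (β := βᵒᵈ) hs hf hz

end InverseOfMonotone

theorem hasDerivAt_invFunOn {𝕜 : Type*} [NontriviallyNormedField 𝕜] {f : 𝕜 → 𝕜} {f' z : 𝕜}
    {s : Set 𝕜} (hz : f '' s ∈ 𝓝 z) (hg : ContinuousWithinAt (invFunOn f s) (f '' s) z)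
    (hf : HasDerivAt f f' (invFunOn f s z)) (hf' : f' ≠ 0) :
    HasDerivAt (invFunOn f s) f'⁻¹ z :=
  hf.of_local_left_inverse (hg.continuousAt hz) hf' <| eventually_of_mem hz fun _ ⟨x, hx, hxw⟩ =>
    invFunOn_eq ⟨x, hx, hxw⟩

theorem mul_sub_ne_zero_of_ne_div {𝕜 : Type*} [Field 𝕜] {a b y : 𝕜} (ha : a ≠ 0) (hy : y ≠ b / a) :
    a * y - b ≠ 0 :=
  sub_ne_zero.2 fun h => hy (by rw [← h, mul_div_cancel_left₀ _ ha])

/-- `Real.log` is `log |·|`, so this single formula is an antiderivative of `y / (a * y - b)`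
on both sides of the equilibrium `b / a`. -/
noncomputable def rg2Time (a b y : ℝ) : ℝ := y / a + b / a ^ 2 * Real.log (a * y - b)

namespace rg2Time

variable {a b : ℝ}

theorem hasDerivAt (ha : a ≠ 0) {y : ℝ} (hy : y ≠ b / a) :
    HasDerivAt (rg2Time a b) (y / (a * y - b)) y := by
  have hlin : HasDerivAt (fun y => a * y - b) a y := by
    simpa using ((hasDerivAt_id y).const_mul a).sub_const b
  have hne := mul_sub_ne_zero_of_ne_div ha hy
  refine (((hasDerivAt_id y).div_const a).add ((hlin.log hne).const_mul (b / a ^ 2))).congr_deriv ?_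
  field_simp
  ring

theorem tendsto_nhdsNE_atBot (ha : 0 < a) (hb : 0 < b) :
    Tendsto (rg2Time a b) (𝓝[≠] (b / a)) atBot := by
  have hlin : Tendsto (fun y => a * y - b) (𝓝[≠] (b / a)) (𝓝[≠] 0) := by
    refine tendsto_nhdsWithin_of_tendsto_nhds_of_eventually_within _ ?_ ?_
    · have : Tendsto (fun y => a * y - b) (𝓝 (b / a)) (𝓝 (a * (b / a) - b)) :=
        ((continuous_const.mul continuous_id).sub continuous_const).continuousAt
      rw [mul_div_cancel₀ b ha.ne', sub_self] at this
      exact this.mono_left nhdsWithin_le_nhds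
    · filter_upwards [self_mem_nhdsWithin] with y hy
      exact mul_sub_ne_zero_of_ne_div ha.ne' hy
  have hfst : Tendsto (fun y => y / a) (𝓝[≠] (b / a)) (𝓝 (b / a / a)) :=
    (continuous_id.div_const a).continuousAt.continuousWithinAt.tendsto
  exact hfst.add_atBot ((Real.tendsto_log_nhdsNE_zero.comp hlin).const_mul_atBot (by positivity))

theorem tendsto_atTop_atTop (ha : 0 < a) (hb : 0 < b) :
    Tendsto (rg2Time a b) atTop atTop := by
  have hlin : Tendsto (fun y => a * y - b) atTop atTop :=
    tendsto_atTop_add_const_right _ (-b) (tendsto_id.const_mul_atTop ha)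
  exact (tendsto_id.atTop_div_const ha).atTop_add_atTop
    (Tendsto.const_mul_atTop (by positivity) (Real.tendsto_log_atTop.comp hlin))

theorem strictMonoOn_Ioi (ha : 0 < a) (hb : 0 ≤ b) :
    StrictMonoOn (rg2Time a b) (Ioi (b / a)) := by
  refine strictMonoOn_of_deriv_pos (convex_Ioi _)
    (fun y hy => (hasDerivAt ha.ne' (ne_of_gt hy)).continuousAt.continuousWithinAt) ?_
  intro y hy
  rw [interior_Ioi] at hy
  rw [(hasDerivAt ha.ne' (ne_of_gt hy)).deriv]
  exact div_pos ((div_nonneg hb ha.le).trans_lt hy) (sub_pos.2 ((div_lt_iff₀' ha).1 hy))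

theorem image_Ioi (ha : 0 < a) (hb : 0 < b) : rg2Time a b '' Ioi (b / a) = univ := by
  refine univ_subset_iff.1 (ContinuousOn.surjOn_of_tendsto nonempty_Ioi ?_ ?_ ?_)
  · exact fun y hy => (hasDerivAt ha.ne' (ne_of_gt hy)).continuousAt.continuousWithinAt
  · rw [tendsto_comp_coe_Ioi_atBot]
    exact (tendsto_nhdsNE_atBot ha hb).mono_left (nhdsGT_le_nhdsNE _)
  · rw [tendsto_comp_val_Ioi_atTop]
    exact tendsto_atTop_atTop ha hb

theorem strictAntiOn_Ico (ha : 0 < a) : StrictAntiOn (rg2Time a b) (Ico 0 (b / a)) := by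
  refine strictAntiOn_of_deriv_neg (convex_Ico _ _)
    (fun y hy => (hasDerivAt ha.ne' (ne_of_lt hy.2)).continuousAt.continuousWithinAt) ?_
  intro y hy
  rw [interior_Ico] at hy
  rw [(hasDerivAt ha.ne' (ne_of_lt hy.2)).deriv]
  exact div_neg_of_pos_of_neg hy.1 (sub_neg.2 ((lt_div_iff₀' ha).1 hy.2))

theorem image_Ico (ha : 0 < a) (hb : 0 < b) :
    rg2Time a b '' Ico 0 (b / a) = Iic (rg2Time a b 0) := by
  have hm : 0 < b / a := div_pos hb ha
  refine subset_antisymm ?_ fun z hz => ?_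
  · rintro _ ⟨y, hy, rfl⟩
    exact (strictAntiOn_Ico ha).antitoneOn ⟨le_rfl, hm⟩ hy hy.1
  obtain ⟨y, hyz, hy⟩ := (((tendsto_nhdsNE_atBot ha hb).mono_left (nhdsLT_le_nhdsNE _)).eventually
    (eventually_le_atBot z)).and (Ioo_mem_nhdsLT hm) |>.exists
  have hcont : ContinuousOn (rg2Time a b) (Icc 0 y) := fun x hx =>
    (hasDerivAt ha.ne' (hx.2.trans_lt hy.2).ne).continuousAt.continuousWithinAt
  obtain ⟨x, hx, rfl⟩ := intermediate_value_Icc' hy.1.le hcont ⟨hyz, hz⟩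
  exact ⟨x, ⟨hx.1, hx.2.trans_lt hy.2⟩, rfl⟩

theorem hasDerivAt_invFunOn (ha : 0 < a) {s : Set ℝ} {z : ℝ} (hz : rg2Time a b '' s ∈ 𝓝 z)
    (hg : ContinuousWithinAt (invFunOn (rg2Time a b) s) (rg2Time a b '' s) z)
    (h0 : invFunOn (rg2Time a b) s z ≠ 0) (hm : invFunOn (rg2Time a b) s z ≠ b / a) :
    HasDerivAt (invFunOn (rg2Time a b) s) (a - b / invFunOn (rg2Time a b) s z) z := by
  have hlin := mul_sub_ne_zero_of_ne_div ha.ne' hm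
  refine (_root_.hasDerivAt_invFunOn hz hg (hasDerivAt ha.ne' hm)
    (div_ne_zero h0 hlin)).congr_deriv ?_
  field_simp

theorem exists_strictMono_solution (ha : 0 < a) (hb : 0 < b) (hba : b < a) :
    ∃ φ : ℝ → ℝ, φ 0 = 1 ∧ (∀ t, 0 < φ t ∧ HasDerivAt φ (a - b / φ t) t) ∧ StrictMono φ := by
  have hmono := strictMonoOn_Ioi ha hb.le
  have himage : ∀ z, z ∈ rg2Time a b '' Ioi (b / a) := fun z => (image_Ioi ha hb).symm ▸ mem_univ z
  have hmem : ∀ z, invFunOn (rg2Time a b) (Ioi (b / a)) z ∈ Ioi (b / a) := fun z =>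
    invFunOn_mem (himage z)
  refine ⟨fun t => invFunOn (rg2Time a b) (Ioi (b / a)) (t + rg2Time a b 1), ?_, fun t => ?_,
    fun s t hst => hmono.strictMonoOn_invFunOn (himage _) (himage _) (add_lt_add_left hst _)⟩
  · simpa only [zero_add] using hmono.injOn.leftInvOn_invFunOn ((div_lt_one ha).2 hba)
  have hpos := (div_pos hb ha).trans (hmem (t + rg2Time a b 1))
  refine ⟨hpos, (hasDerivAt_invFunOn ha ?_ ?_ hpos.ne' (hmem _).ne').comp_add_const t _⟩
  · rw [image_Ioi ha hb]
    exact univ_mem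
  · exact hmono.continuousWithinAt_invFunOn ordConnected_Ioi (himage _)

theorem exists_extinct_solution (ha : 0 < a) (hb : 0 < b) (hab : a < b) :
    ∃ T > (0:ℝ), ∃ φ : ℝ → ℝ, φ 0 = 1 ∧ ContinuousOn φ (Icc 0 T) ∧
      (∀ t ∈ Ico 0 T, 0 < φ t ∧ HasDerivAt φ (a - b / φ t) t) ∧
      StrictAntiOn φ (Icc 0 T) ∧ φ T = 0 := by
  have hanti := strictAntiOn_Ico (b := b) ha
  have hleft := hanti.injOn.leftInvOn_invFunOn
  have h0 : (0:ℝ) ∈ Ico 0 (b / a) := ⟨le_rfl, div_pos hb ha⟩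
  have h1 : (1:ℝ) ∈ Ico 0 (b / a) := ⟨zero_le_one, (one_lt_div ha).2 hab⟩
  have himage : ∀ t ∈ Icc 0 (rg2Time a b 0 - rg2Time a b 1),
      t + rg2Time a b 1 ∈ rg2Time a b '' Ico 0 (b / a) := by
    rw [image_Ico ha hb]
    intro t ht
    exact le_sub_iff_add_le.1 ht.2
  refine ⟨rg2Time a b 0 - rg2Time a b 1, sub_pos.2 (hanti h0 h1 one_pos),
    fun t => invFunOn (rg2Time a b) (Ico 0 (b / a)) (t + rg2Time a b 1), ?_, ?_, ?_, ?_, ?_⟩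
  · simpa only [zero_add] using hleft h1
  · exact fun t ht => (hanti.continuousWithinAt_invFunOn ordConnected_Ico (himage t ht)).comp
      (f := (· + rg2Time a b 1)) (continuous_add_const _).continuousWithinAt himage
  · intro t ht
    have hz := himage t (Ico_subset_Icc_self ht)
    have hmem := invFunOn_mem hz
    have hne : invFunOn (rg2Time a b) (Ico 0 (b / a)) (t + rg2Time a b 1) ≠ 0 := fun h => by
      have := invFunOn_eq hz
      rw [h] at this
      linarith [ht.2]
    have hpos := lt_of_le_of_ne hmem.1 hne.symm
    refine ⟨hpos, (hasDerivAt_invFunOn ha ?_ ?_ hne hmem.2.ne).comp_add_const t _⟩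
    · rw [image_Ico ha hb]
      exact Iic_mem_nhds (by linarith [ht.2])
    · exact hanti.continuousWithinAt_invFunOn ordConnected_Ico hz
  · exact fun s hs t ht hst =>
      hanti.strictAntiOn_invFunOn (himage s hs) (himage t ht) (add_lt_add_left hst _)
  · simpa only [sub_add_cancel] using hleft h0

end rg2Time

/-- For constant negative curvature `K < 0` under the RG-2 conformal factor ODE
`φ' = -2K(n-1) - (α/φ)K²(n-1)`, `φ(0)=1`: if `|K| < 2/α` the initial derivative is
positive, and there is an immortal strictly increasing solution; if `|K| > 2/α` the
initial derivative is negative and the solution strictly decreases, reaching `0`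
in finite time. -/
theorem rg2_negative_curvature_dichotomy
    (K : ℝ) (n : ℕ) (α : ℝ) (hK : K < 0) (hn : 2 ≤ n) (hα : 0 < α) :
    (|K| < 2/α →
      (0 < -2*K*((n:ℝ)-1) - α*K^2*((n:ℝ)-1)) ∧
      ∃ φ : ℝ → ℝ, φ 0 = 1 ∧
        (∀ t ∈ Ici (0:ℝ), 0 < φ t ∧
          HasDerivAt φ (-2*K*((n:ℝ)-1) - (α/φ t)*K^2*((n:ℝ)-1)) t) ∧
        StrictMonoOn φ (Ici (0:ℝ))) ∧
    (2/α < |K| →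
      (-2*K*((n:ℝ)-1) - α*K^2*((n:ℝ)-1) < 0) ∧
      ∃ T > (0:ℝ), ∃ φ : ℝ → ℝ, φ 0 = 1 ∧
        ContinuousOn φ (Icc 0 T) ∧
        (∀ t ∈ Ico (0:ℝ) T, 0 < φ t ∧
          HasDerivAt φ (-2*K*((n:ℝ)-1) - (α/φ t)*K^2*((n:ℝ)-1)) t) ∧
        StrictAntiOn φ (Icc (0:ℝ) T) ∧ φ T = 0) := by
  have hn1 : (0:ℝ) < (n:ℝ) - 1 := by
    have : (2:ℝ) ≤ n := by exact_mod_cast hn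
    linarith
  have ha : 0 < -2*K*((n:ℝ)-1) := mul_pos (by linarith) hn1
  have hb : 0 < α*K^2*((n:ℝ)-1) := mul_pos (mul_pos hα (sq_pos_of_neg hK)) hn1
  have hsign : α*K^2*((n:ℝ)-1) - -2*K*((n:ℝ)-1) = |K| * ((n:ℝ)-1) * (α*|K| - 2) := by
    rw [abs_of_neg hK]
    ring
  have hKn : 0 < |K| * ((n:ℝ)-1) := mul_pos (abs_pos.2 hK.ne) hn1
  have hrhs : ∀ y : ℝ, -2*K*((n:ℝ)-1) - (α/y)*K^2*((n:ℝ)-1) =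
      -2*K*((n:ℝ)-1) - α*K^2*((n:ℝ)-1) / y := fun y => by ring
  simp only [hrhs]
  refine ⟨fun h => ?_, fun h => ?_⟩
  · have hba : α*K^2*((n:ℝ)-1) < -2*K*((n:ℝ)-1) := by
      linarith [mul_neg_of_pos_of_neg hKn (sub_neg.2 ((lt_div_iff₀' hα).1 h))]
    obtain ⟨φ, hφ0, hφ, hmono⟩ := rg2Time.exists_strictMono_solution ha hb hba
    exact ⟨by linarith, φ, hφ0, fun t _ => hφ t, hmono.strictMonoOn _⟩
  · have hab : -2*K*((n:ℝ)-1) < α*K^2*((n:ℝ)-1) := by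
      linarith [mul_pos hKn (sub_pos.2 ((div_lt_iff₀' hα).1 h))]
    exact ⟨by linarith, rg2Time.exists_extinct_solution ha hb hab⟩
end

section
/- Consider the system A' = -(4A²B² + 2αA³)/B⁴, B' = (4AB² - 8B³ - 10αA² - 16αB² + 24αAB)/B³ for A, B > 0 and α ≥ 0. If A(t₀) = B(t₀) at some time t₀, then A(t) = B(t) for all t in the maximal interval of existence; i.e. the diagonal A = B is invariant under the flow. -/
/-!
Along a solution, `A' - B'` factors as `g(t) · (A - B)` with `g` a rational function of `A` and
`B` whose only pole is `B = 0`. So `D = A - B` solves the scalar linear ODE `D' = g D` with `g`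
continuous wherever `B > 0`, and uniqueness of solutions forces `D ≡ 0` once `D(t₀) = 0`.
-/

open Set

section LinearODE

variable {E : Type*} [NormedAddCommGroup E] [NormedSpace ℝ E] {D : ℝ → E} {g : ℝ → ℝ}

theorem eqOn_zero_of_hasDerivAt_eq_smul_self_Icc {a b t₀ : ℝ} (hg : ContinuousOn g (Icc a b))
    (hD : ∀ t ∈ Icc a b, HasDerivAt D (g t • D t) t) (ht₀ : t₀ ∈ Icc a b) (h₀ : D t₀ = 0) :
    EqOn D 0 (Icc a b) := by
  obtain ⟨C, hC⟩ := isCompact_Icc.exists_bound_of_continuousOn hg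
  have hlip : ∀ t ∈ Icc a b, LipschitzOnWith C.toNNReal (g t • ·) (univ : Set E) := fun t ht =>
    ((lipschitzWith_smul (g t)).weaken (by
      rw [← NNReal.coe_le_coe, coe_nnnorm, Real.coe_toNNReal']
      exact (hC t ht).trans (le_max_left _ _))).lipschitzOnWith
  have hDc : ContinuousOn D (Icc a b) := fun t ht => (hD t ht).continuousAt.continuousWithinAt
  have hzero : ∀ t : ℝ, HasDerivAt (0 : ℝ → E) (g t • (0 : ℝ → E) t) t := fun t => by simp
  rw [← Icc_union_Icc_eq_Icc ht₀.1 ht₀.2]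
  refine EqOn.union ?_ ?_
  · exact ODE_solution_unique_of_mem_Icc_left
      (fun t ht => hlip t (Icc_subset_Icc_right ht₀.2 (Ioc_subset_Icc_self ht)))
      (hDc.mono (Icc_subset_Icc_right ht₀.2))
      (fun t ht => (hD t (Icc_subset_Icc_right ht₀.2 (Ioc_subset_Icc_self ht))).hasDerivWithinAt)
      (fun _ _ => mem_univ _) continuousOn_const (fun t _ => (hzero t).hasDerivWithinAt)
      (fun _ _ => mem_univ _) h₀
  · exact ODE_solution_unique_of_mem_Icc_right
      (fun t ht => hlip t (Icc_subset_Icc_left ht₀.1 (Ico_subset_Icc_self ht)))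
      (hDc.mono (Icc_subset_Icc_left ht₀.1))
      (fun t ht => (hD t (Icc_subset_Icc_left ht₀.1 (Ico_subset_Icc_self ht))).hasDerivWithinAt)
      (fun _ _ => mem_univ _) continuousOn_const (fun t _ => (hzero t).hasDerivWithinAt)
      (fun _ _ => mem_univ _) h₀

theorem eqOn_zero_of_hasDerivAt_eq_smul_self {I : Set ℝ} (hI : I.OrdConnected) {t₀ : ℝ}
    (ht₀ : t₀ ∈ I) (hg : ContinuousOn g I) (hD : ∀ t ∈ I, HasDerivAt D (g t • D t) t)
    (h₀ : D t₀ = 0) : EqOn D 0 I := fun _ ht =>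
  have hsub := hI.uIcc_subset ht₀ ht
  eqOn_zero_of_hasDerivAt_eq_smul_self_Icc (hg.mono hsub) (fun s hs => hD s (hsub hs))
    left_mem_uIcc h₀ right_mem_uIcc

end LinearODE

noncomputable def rg2DiagonalRate (α a b : ℝ) : ℝ :=
  (-2*α*a^2 + (8*α*b - 4*b^2)*a - 8*b^3 - 16*α*b^2) / b^4

theorem rg2_vectorField_sub_eq_diagonalRate_mul {α a b : ℝ} (hb : b ≠ 0) :
    -(4*a^2*b^2 + 2*α*a^3)/b^4
        - (4*a*b^2 - 8*b^3 - 10*α*a^2 - 16*α*b^2 + 24*α*a*b)/b^3 =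
      rg2DiagonalRate α a b * (a - b) := by
  unfold rg2DiagonalRate
  field_simp
  ring

theorem rg2_su2_diagonal_invariant_general
    (α : ℝ) (A B : ℝ → ℝ) (I : Set ℝ) (hI : I.OrdConnected)
    (t₀ : ℝ) (ht₀ : t₀ ∈ I)
    (hsol : ∀ t ∈ I, 0 < A t ∧ 0 < B t ∧
      HasDerivAt A (-(4*(A t)^2*(B t)^2 + 2*α*(A t)^3)/(B t)^4) t ∧
      HasDerivAt B ((4*(A t)*(B t)^2 - 8*(B t)^3 - 10*α*(A t)^2
        - 16*α*(B t)^2 + 24*α*(A t)*(B t))/(B t)^3) t)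
    (heq : A t₀ = B t₀) :
    ∀ t ∈ I, A t = B t := by
  have hB : ∀ t ∈ I, B t ≠ 0 := fun t ht => (hsol t ht).2.1.ne'
  have hrate : ContinuousOn (fun t => rg2DiagonalRate α (A t) (B t)) I := by
    have hAc : ContinuousOn A I := fun t ht => (hsol t ht).2.2.1.continuousAt.continuousWithinAt
    have hBc : ContinuousOn B I := fun t ht => (hsol t ht).2.2.2.continuousAt.continuousWithinAt
    unfold rg2DiagonalRate
    exact ContinuousOn.div (by fun_prop) (by fun_prop) fun t ht => pow_ne_zero 4 (hB t ht)
  have hdiff : ∀ t ∈ I,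
      HasDerivAt (A - B) (rg2DiagonalRate α (A t) (B t) • (A - B) t) t := fun t ht => by
    rw [smul_eq_mul, Pi.sub_apply, ← rg2_vectorField_sub_eq_diagonalRate_mul (hB t ht)]
    exact (hsol t ht).2.2.1.sub (hsol t ht).2.2.2
  intro t ht
  exact sub_eq_zero.mp
    (eqOn_zero_of_hasDerivAt_eq_smul_self hI ht₀ hrate hdiff (sub_eq_zero.mpr heq) ht)

/-- For the LRS SU(2) RG-2 system
`A' = -(4A²B² + 2αA³)/B⁴`, `B' = (4AB² - 8B³ - 10αA² - 16αB² + 24αAB)/B³`,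
the diagonal `A = B` is invariant: if `A(t₀) = B(t₀)` then `A ≡ B` on the
interval of existence. -/
theorem rg2_su2_diagonal_invariant
    (α : ℝ) (hα : 0 ≤ α) (A B : ℝ → ℝ) (I : Set ℝ) (hI : I.OrdConnected)
    (t₀ : ℝ) (ht₀ : t₀ ∈ I)
    (hsol : ∀ t ∈ I, 0 < A t ∧ 0 < B t ∧
      HasDerivAt A (-(4*(A t)^2*(B t)^2 + 2*α*(A t)^3)/(B t)^4) t ∧
      HasDerivAt B ((4*(A t)*(B t)^2 - 8*(B t)^3 - 10*α*(A t)^2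
        - 16*α*(B t)^2 + 24*α*(A t)*(B t))/(B t)^3) t)
    (heq : A t₀ = B t₀) :
    ∀ t ∈ I, A t = B t :=
  rg2_su2_diagonal_invariant_general α A B I hI t₀ ht₀ hsol heq
end

section
/- For α > 0, the function B(A) = √(3α/2)·A^{1/2} solves the trajectory ODE dB/dA = B(5αA - 2B²)/(A(2B² + αA)) for A > 0. -/
open Real

theorem hasDerivAt_const_mul_sqrt (c : ℝ) {x : ℝ} (hx : 0 < x) :
    HasDerivAt (fun y => c * √y) (c * √x / (2 * x)) x := by
  refine ((hasDerivAt_sqrt hx.ne').const_mul c).congr_deriv ?_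
  have hsx : √x ≠ 0 := (sqrt_pos.2 hx).ne'
  field_simp
  rw [sq_sqrt hx.le]

/-- `B / (2 * A)` is the slope of every curve `B = c√A`, see `hasDerivAt_const_mul_sqrt`. -/
theorem rg2_nil_slope_of_sq_eq {α A B : ℝ} (hA : A ≠ 0) (hB : B ^ 2 = 3 * α / 2 * A) :
    B * (5 * α * A - 2 * B ^ 2) / (A * (2 * B ^ 2 + α * A)) = B / (2 * A) := by
  rw [hB]
  rcases eq_or_ne α 0 with rfl | hα
  · obtain rfl : B = 0 := by simpa using hB
    simp
  · field_simp
    ring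

/-- For `α > 0`, the parabola `B(A) = √(3α/2)·A^{1/2}` solves the LRS Nil RG-2
trajectory ODE `dB/dA = B(5αA - 2B²)/(A(2B² + αA))` for `A > 0`. -/
theorem rg2_nil_invariant_parabola (α : ℝ) (hα : 0 < α) (A : ℝ) (hA : 0 < A) :
    HasDerivAt (fun x : ℝ => Real.sqrt (3*α/2) * Real.sqrt x)
      ((Real.sqrt (3*α/2) * Real.sqrt A)
        * (5*α*A - 2*(Real.sqrt (3*α/2) * Real.sqrt A)^2)
        / (A*(2*(Real.sqrt (3*α/2) * Real.sqrt A)^2 + α*A))) A := by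
  have on_parabola : (√(3 * α / 2) * √A) ^ 2 = 3 * α / 2 * A := by
    rw [mul_pow, sq_sqrt (by positivity), sq_sqrt hA.le]
  rw [rg2_nil_slope_of_sq_eq hA.ne' on_parabola]
  exact hasDerivAt_const_mul_sqrt _ hA
end

section
/- Let α > 0 and consider the RG-2 Nil system A' = -4A²/B² - 2αA³/B⁴, B' = 4A/B - 10αA²/B³ with A, B > 0. If B(t) = √(3α/2)·A(t)^{1/2} holds at time 0, it holds for all time, and then A satisfies A' = -(32/(9α))A, so A(t) = A₀e^{-32t/(9α)}; in particular the solution is immortal and (A(t), B(t)) → (0,0) exponentially as t → ∞. -/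
/-!
On the parabola `B² = (3α/2) A` the vector field reduces to `A' = -(32/(9α)) A`,
`B' = -(16/(9α)) B`, so it is tangent to the parabola. Off it, the deviation
`E = B² - (3α/2) A` obeys the linear equation `E' = g E` with `g = -2A(αA - 4B²)/B⁴`,
continuous while `B > 0`; Grönwall's inequality then forces `E ≡ 0` once `E(0) = 0`.
The same uniqueness argument, applied to `A - A₀ e^{ct}`, gives the exponential decay.
-/

open Set Filter Topology

theorem eq_zero_of_hasDerivAt_eq_smul_self {E : Type*} [NormedAddCommGroup E] [NormedSpace ℝ E]
    {f : ℝ → E} {g : ℝ → ℝ} {a b : ℝ} (hg : ContinuousOn g (Icc a b))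
    (hf : ∀ t ∈ Icc a b, HasDerivAt f (g t • f t) t) (ha : f a = 0) :
    ∀ t ∈ Icc a b, f t = 0 := by
  obtain ⟨K, hK⟩ := isCompact_Icc.exists_bound_of_continuousOn hg
  refine eq_zero_of_abs_deriv_le_mul_abs_self_of_eq_zero_right (K := K)
    (fun t ht => (hf t ht).continuousAt.continuousWithinAt)
    (fun t ht => (hf t (Ico_subset_Icc_self ht)).hasDerivWithinAt) ha fun t ht => ?_
  rw [norm_smul]
  exact mul_le_mul_of_nonneg_right (hK t (Ico_subset_Icc_self ht)) (norm_nonneg _)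

theorem eq_mul_exp_of_hasDerivAt_eq_mul {f : ℝ → ℝ} {c a b : ℝ}
    (hf : ∀ t ∈ Icc a b, HasDerivAt f (c * f t) t) :
    ∀ t ∈ Icc a b, f t = f a * Real.exp (c * (t - a)) := by
  have hdev : ∀ t ∈ Icc a b, HasDerivAt (fun s => f s - f a * Real.exp (c * (s - a)))
      (c * (f t - f a * Real.exp (c * (t - a)))) t := fun t ht => by
    have hexp := ((((hasDerivAt_id' t).sub_const a).const_mul c).exp).const_mul (f a)
    exact ((hf t ht).sub hexp).congr_deriv (by ring)
  intro t ht
  exact sub_eq_zero.mp (eq_zero_of_hasDerivAt_eq_smul_self continuousOn_const hdev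
    (by simp) t ht)

theorem hasDerivAt_const_mul_exp_mul_div (C k d t : ℝ) :
    HasDerivAt (fun t => C * Real.exp (k * t / d)) (k / d * (C * Real.exp (k * t / d))) t :=
  ((((hasDerivAt_id' t).const_mul k).div_const d).exp.const_mul C).congr_deriv (by ring)

theorem tendsto_const_mul_exp_mul_div_atTop (C : ℝ) {k d : ℝ} (hk : k < 0) (hd : 0 < d) :
    Tendsto (fun t => C * Real.exp (k * t / d)) atTop (𝓝 0) := by
  have hlin : Tendsto (fun t => k * t / d) atTop atBot := by
    simpa only [mul_div_right_comm, id] using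
      tendsto_id.const_mul_atTop_of_neg (div_neg_of_neg_of_pos hk hd)
  simpa using (Real.tendsto_exp_comp_nhds_zero.mpr hlin).const_mul C

noncomputable def rg2NilA (α a b : ℝ) : ℝ := -4*a^2/b^2 - 2*α*a^3/b^4

noncomputable def rg2NilB (α a b : ℝ) : ℝ := 4*a/b - 10*α*a^2/b^3

def IsRG2NilSolution (α : ℝ) (A B : ℝ → ℝ) (s : Set ℝ) : Prop :=
  ∀ t ∈ s, 0 < A t ∧ 0 < B t ∧
    HasDerivAt A (rg2NilA α (A t) (B t)) t ∧ HasDerivAt B (rg2NilB α (A t) (B t)) t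

section Parabola

variable {α a b : ℝ}

theorem rg2NilA_of_sq_eq (hα : α ≠ 0) (ha : a ≠ 0) (h : b^2 = 3*α/2 * a) :
    rg2NilA α a b = -(32/(9*α)) * a := by
  rw [rg2NilA, show b^4 = (b^2)^2 by ring, h]
  field_simp
  ring

theorem rg2NilB_of_sq_eq (hα : α ≠ 0) (hb : b ≠ 0) (h : b^2 = 3*α/2 * a) :
    rg2NilB α a b = -(16/(9*α)) * b := by
  rw [rg2NilB, show a = 2/(3*α) * b^2 by rw [h]; field_simp]
  field_simp
  ring

theorem two_mul_rg2NilB_sub_rg2NilA (hb : b ≠ 0) :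
    2 * b * rg2NilB α a b - 3*α/2 * rg2NilA α a b
      = -2*a*(α*a - 4*b^2)/b^4 * (b^2 - 3*α/2 * a) := by
  rw [rg2NilA, rg2NilB]
  field_simp
  ring

end Parabola

namespace IsRG2NilSolution

variable {α : ℝ} {A B : ℝ → ℝ}

theorem mono {s t : Set ℝ} (h : IsRG2NilSolution α A B s) (hts : t ⊆ s) :
    IsRG2NilSolution α A B t :=
  fun x hx => h x (hts hx)

theorem sq_eq_of_sq_eq {a b : ℝ} (h : IsRG2NilSolution α A B (Icc a b))
    (ha : B a ^ 2 = 3*α/2 * A a) : ∀ t ∈ Icc a b, B t ^ 2 = 3*α/2 * A t := by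
  have hA : ContinuousOn A (Icc a b) := fun t ht =>
    (h t ht).2.2.1.continuousAt.continuousWithinAt
  have hB : ContinuousOn B (Icc a b) := fun t ht =>
    (h t ht).2.2.2.continuousAt.continuousWithinAt
  have hg : ContinuousOn (fun t => -2*A t*(α*A t - 4*B t^2)/B t^4) (Icc a b) :=
    ((continuousOn_const.mul hA).mul (((continuousOn_const.mul hA).sub
      (continuousOn_const.mul (hB.pow 2))))).div (hB.pow 4)
      fun t ht => pow_ne_zero 4 (h t ht).2.1.ne'
  have hdev : ∀ t ∈ Icc a b, HasDerivAt (fun t => B t ^ 2 - 3*α/2 * A t)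
      (-2*A t*(α*A t - 4*B t^2)/B t^4 * (B t ^ 2 - 3*α/2 * A t)) t := fun t ht => by
    obtain ⟨-, hBt, hAd, hBd⟩ := h t ht
    exact ((hBd.pow 2).sub (hAd.const_mul _)).congr_deriv
      (by rw [← two_mul_rg2NilB_sub_rg2NilA hBt.ne']; ring)
  intro t ht
  exact sub_eq_zero.mp (eq_zero_of_hasDerivAt_eq_smul_self hg hdev (sub_eq_zero.mpr ha) t ht)

end IsRG2NilSolution

theorem isRG2NilSolution_exp {α A₀ : ℝ} (hα : 0 < α) (hA₀ : 0 < A₀) :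
    IsRG2NilSolution α (fun t => A₀ * Real.exp (-32*t/(9*α)))
      (fun t => Real.sqrt (3*α/2) * Real.sqrt A₀ * Real.exp (-16*t/(9*α))) univ := by
  intro t _
  have hApos : 0 < A₀ * Real.exp (-32*t/(9*α)) := by positivity
  have hBpos : 0 < Real.sqrt (3*α/2) * Real.sqrt A₀ * Real.exp (-16*t/(9*α)) := by
    have := Real.sqrt_pos.mpr hA₀
    have := Real.sqrt_pos.mpr (show 0 < 3*α/2 by positivity)
    positivity
  have hparabola : (Real.sqrt (3*α/2) * Real.sqrt A₀ * Real.exp (-16*t/(9*α)))^2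
      = 3*α/2 * (A₀ * Real.exp (-32*t/(9*α))) := by
    rw [mul_pow, mul_pow, Real.sq_sqrt (by positivity), Real.sq_sqrt hA₀.le, ← Real.exp_nat_mul]
    ring_nf
  refine ⟨hApos, hBpos, ?_, ?_⟩
  · rw [rg2NilA_of_sq_eq hα.ne' hApos.ne' hparabola, ← neg_div]
    exact hasDerivAt_const_mul_exp_mul_div _ _ _ t
  · rw [rg2NilB_of_sq_eq hα.ne' hBpos.ne' hparabola, ← neg_div]
    exact hasDerivAt_const_mul_exp_mul_div _ _ _ t

theorem rg2_nil_parabola_solution_general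
    (α A₀ T : ℝ) (hα : 0 < α) (hA₀ : 0 < A₀)
    (A B : ℝ → ℝ) (hA0 : A 0 = A₀)
    (hB0 : B 0 = Real.sqrt (3*α/2) * Real.sqrt A₀)
    (hsol : ∀ t ∈ Ico (0:ℝ) T, 0 < A t ∧ 0 < B t ∧
      HasDerivAt A (-4*(A t)^2/(B t)^2 - 2*α*(A t)^3/(B t)^4) t ∧
      HasDerivAt B (4*(A t)/(B t) - 10*α*(A t)^2/(B t)^3) t) :
    (∀ t ∈ Ico (0:ℝ) T, B t = Real.sqrt (3*α/2) * Real.sqrt (A t) ∧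
      HasDerivAt A (-(32/(9*α)) * A t) t ∧
      A t = A₀ * Real.exp (-32*t/(9*α))) ∧
    (∃ A' B' : ℝ → ℝ, A' 0 = A₀ ∧ B' 0 = Real.sqrt (3*α/2) * Real.sqrt A₀ ∧
      (∀ t ∈ Ici (0:ℝ), 0 < A' t ∧ 0 < B' t ∧
        HasDerivAt A' (-4*(A' t)^2/(B' t)^2 - 2*α*(A' t)^3/(B' t)^4) t ∧
        HasDerivAt B' (4*(A' t)/(B' t) - 10*α*(A' t)^2/(B' t)^3) t ∧
        A' t = A₀ * Real.exp (-32*t/(9*α))) ∧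
      Tendsto A' atTop (nhds 0) ∧ Tendsto B' atTop (nhds 0)) := by
  have hsol : IsRG2NilSolution α A B (Ico 0 T) := hsol
  have hsub : ∀ t ∈ Ico (0:ℝ) T, Icc 0 t ⊆ Ico 0 T :=
    fun t ht s hs => ⟨hs.1, hs.2.trans_lt ht.2⟩
  have hB0sq : B 0 ^ 2 = 3*α/2 * A 0 := by
    rw [hB0, hA0, mul_pow, Real.sq_sqrt (by positivity), Real.sq_sqrt hA₀.le]
  have hparabola : ∀ t ∈ Ico (0:ℝ) T, B t ^ 2 = 3*α/2 * A t := fun t ht =>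
    (hsol.mono (hsub t ht)).sq_eq_of_sq_eq hB0sq t (right_mem_Icc.mpr ht.1)
  have hlin : ∀ t ∈ Ico (0:ℝ) T, HasDerivAt A (-(32/(9*α)) * A t) t := fun t ht => by
    obtain ⟨hAt, -, hAd, -⟩ := hsol t ht
    rwa [rg2NilA_of_sq_eq hα.ne' hAt.ne' (hparabola t ht)] at hAd
  refine ⟨fun t ht => ⟨?_, hlin t ht, ?_⟩, ?_⟩
  · rw [← Real.sqrt_mul (by positivity), ← hparabola t ht, Real.sqrt_sq (hsol t ht).2.1.le]
  · rw [eq_mul_exp_of_hasDerivAt_eq_mul (fun s hs => hlin s (hsub t ht hs)) t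
      (right_mem_Icc.mpr ht.1), hA0]
    ring_nf
  · refine ⟨fun t => A₀ * Real.exp (-32*t/(9*α)),
      fun t => Real.sqrt (3*α/2) * Real.sqrt A₀ * Real.exp (-16*t/(9*α)), by simp, by simp,
      fun t _ => ?_,
      tendsto_const_mul_exp_mul_div_atTop _ (by norm_num) (by positivity),
      tendsto_const_mul_exp_mul_div_atTop _ (by norm_num) (by positivity)⟩
    obtain ⟨hAt, hBt, hAd, hBd⟩ := isRG2NilSolution_exp hα hA₀ t (mem_univ t)
    exact ⟨hAt, hBt, hAd, hBd, rfl⟩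

/-- For the LRS Nil RG-2 system `A' = -4A²/B² - 2αA³/B⁴`, `B' = 4A/B - 10αA²/B³`
with `α > 0`: if `B = √(3α/2)·√A` at time `0`, this holds for all time, and
`A' = -(32/(9α))A`, so `A(t) = A₀ e^{-32t/(9α)}`; moreover there is an immortal
solution of this form with `(A, B) → (0, 0)` as `t → ∞`. -/
theorem rg2_nil_parabola_solution
    (α A₀ T : ℝ) (hα : 0 < α) (hA₀ : 0 < A₀) (hT : 0 < T)
    (A B : ℝ → ℝ) (hA0 : A 0 = A₀)
    (hB0 : B 0 = Real.sqrt (3*α/2) * Real.sqrt A₀)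
    (hsol : ∀ t ∈ Ico (0:ℝ) T, 0 < A t ∧ 0 < B t ∧
      HasDerivAt A (-4*(A t)^2/(B t)^2 - 2*α*(A t)^3/(B t)^4) t ∧
      HasDerivAt B (4*(A t)/(B t) - 10*α*(A t)^2/(B t)^3) t) :
    (∀ t ∈ Ico (0:ℝ) T, B t = Real.sqrt (3*α/2) * Real.sqrt (A t) ∧
      HasDerivAt A (-(32/(9*α)) * A t) t ∧
      A t = A₀ * Real.exp (-32*t/(9*α))) ∧
    (∃ A' B' : ℝ → ℝ, A' 0 = A₀ ∧ B' 0 = Real.sqrt (3*α/2) * Real.sqrt A₀ ∧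
      (∀ t ∈ Ici (0:ℝ), 0 < A' t ∧ 0 < B' t ∧
        HasDerivAt A' (-4*(A' t)^2/(B' t)^2 - 2*α*(A' t)^3/(B' t)^4) t ∧
        HasDerivAt B' (4*(A' t)/(B' t) - 10*α*(A' t)^2/(B' t)^3) t ∧
        A' t = A₀ * Real.exp (-32*t/(9*α))) ∧
      Tendsto A' atTop (nhds 0) ∧ Tendsto B' atTop (nhds 0)) :=
  rg2_nil_parabola_solution_general α A₀ T hα hA₀ A B hA0 hB0 hsol
end

section
/- Consider the RG-2 Sol system A' = -16αA/B², B' = 8 - 16α/B with A, B > 0 and α > 0. Along any solution, the quantities A(t)(1 - 2α/B(t)) and B(t) - B₀ + 2α·ln|(B(t) - 2α)/(B₀ - 2α)| - 8t are conserved (the first constant in t, the second identically zero), provided B(t) ≠ 2α. -/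
open Set

/-!
Along the flow `A (1 - 2α/B)` has derivative zero, and since `B' = 8 (B - 2α)/B` the function
`B + 2α log (B - 2α)` has derivative `B' · B/(B - 2α) = 8`; a function with constant derivative
on an interval is affine there. Mathlib's `Real.log x = Real.log |x|` lets the same computation
cover both sides of `B = 2α`.
-/

theorem eq_add_mul_sub_of_hasDerivAt_Ico {f : ℝ → ℝ} {c a b : ℝ}
    (hf : ∀ x ∈ Ico a b, HasDerivAt f c x) : ∀ t ∈ Ico a b, f t = f a + c * (t - a) := by
  intro t ht
  have hsub : Icc a t ⊆ Ico a b := fun x hx => ⟨hx.1, hx.2.trans_lt ht.2⟩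
  have hline : ∀ x, HasDerivAt (fun x => f a + c * (x - a)) c x := fun x => by
    simpa using ((hasDerivAt_id x).sub_const a).const_mul c |>.const_add (f a)
  refine eq_of_has_deriv_right_eq (f' := fun _ => c)
    (fun x hx => (hf x (hsub (Ico_subset_Icc_self hx))).hasDerivWithinAt)
    (fun x _ => (hline x).hasDerivWithinAt)
    (fun x hx => (hf x (hsub hx)).continuousAt.continuousWithinAt)
    (fun x _ => (hline x).continuousAt.continuousWithinAt) (by simp) t ⟨ht.1, le_rfl⟩

section RG2Sol

variable {α s : ℝ} {A B : ℝ → ℝ}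

theorem hasDerivAt_rg2Sol_mul_one_sub_div (hA : HasDerivAt A (-16*α*(A s)/(B s)^2) s)
    (hB : HasDerivAt B (8 - 16*α/(B s)) s) (hB₀ : B s ≠ 0) :
    HasDerivAt (fun u => A u * (1 - 2*α/(B u))) 0 s := by
  have h : HasDerivAt (fun u => A u * (1 - 2*α/(B u))) _ s :=
    hA.mul ((hasDerivAt_const s 1).sub ((hasDerivAt_const s (2*α)).div hB hB₀))
  convert h using 1
  field_simp
  ring

theorem hasDerivAt_rg2Sol_add_log_sub (hB : HasDerivAt B (8 - 16*α/(B s)) s) (hB₀ : B s ≠ 0)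
    (hB₂ : B s - 2*α ≠ 0) :
    HasDerivAt (fun u => B u + 2*α * Real.log (B u - 2*α)) 8 s := by
  have h : HasDerivAt (fun u => B u + 2*α * Real.log (B u - 2*α)) _ s :=
    hB.add (((hB.sub_const (2*α)).log hB₂).const_mul (2*α))
  have hlog_deriv : (8 - 16*α/(B s)) / (B s - 2*α) = 8 / B s := by
    rw [div_eq_iff hB₂]
    field_simp
    ring
  convert h using 1
  rw [hlog_deriv]
  field_simp
  ring

end RG2Sol

theorem rg2_sol_first_integrals_general
    (α T : ℝ) (A B : ℝ → ℝ)
    (hsol : ∀ t ∈ Ico (0:ℝ) T, 0 < A t ∧ 0 < B t ∧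
      HasDerivAt A (-16*α*(A t)/(B t)^2) t ∧
      HasDerivAt B (8 - 16*α/(B t)) t)
    (hne : ∀ t ∈ Ico (0:ℝ) T, B t ≠ 2*α) :
    ∀ t ∈ Ico (0:ℝ) T,
      A t * (1 - 2*α/(B t)) = A 0 * (1 - 2*α/(B 0)) ∧
      B t - B 0 + 2*α * Real.log |(B t - 2*α)/(B 0 - 2*α)| = 8*t := by
  have hconst := eq_add_mul_sub_of_hasDerivAt_Ico fun s hs =>
    let ⟨_, hB, hA', hB'⟩ := hsol s hs
    hasDerivAt_rg2Sol_mul_one_sub_div hA' hB' hB.ne'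
  have hlinear := eq_add_mul_sub_of_hasDerivAt_Ico fun s hs =>
    let ⟨_, hB, _, hB'⟩ := hsol s hs
    hasDerivAt_rg2Sol_add_log_sub hB' hB.ne' (sub_ne_zero.mpr (hne s hs))
  intro t ht
  have hBt : B t - 2*α ≠ 0 := sub_ne_zero.mpr (hne t ht)
  have hB0 : B 0 - 2*α ≠ 0 := sub_ne_zero.mpr (hne 0 ⟨le_rfl, ht.1.trans_lt ht.2⟩)
  refine ⟨by simpa using hconst t ht, ?_⟩
  rw [abs_div, Real.log_div (abs_ne_zero.mpr hBt) (abs_ne_zero.mpr hB0), Real.log_abs,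
    Real.log_abs]
  linarith [hlinear t ht]

/-- For the LRS Sol RG-2 system `A' = -16αA/B²`, `B' = 8 - 16α/B` with `B ≠ 2α`
along the flow, the quantity `A(1 - 2α/B)` is conserved and
`B(t) - B₀ + 2α ln|(B(t) - 2α)/(B₀ - 2α)| = 8t`. -/
theorem rg2_sol_first_integrals
    (α T : ℝ) (hα : 0 < α) (hT : 0 < T) (A B : ℝ → ℝ)
    (hsol : ∀ t ∈ Ico (0:ℝ) T, 0 < A t ∧ 0 < B t ∧
      HasDerivAt A (-16*α*(A t)/(B t)^2) t ∧
      HasDerivAt B (8 - 16*α/(B t)) t)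
    (hne : ∀ t ∈ Ico (0:ℝ) T, B t ≠ 2*α) :
    ∀ t ∈ Ico (0:ℝ) T,
      A t * (1 - 2*α/(B t)) = A 0 * (1 - 2*α/(B 0)) ∧
      B t - B 0 + 2*α * Real.log |(B t - 2*α)/(B 0 - 2*α)| = 8*t :=
  rg2_sol_first_integrals_general α T A B hsol hne
end

section
/- Let α > 0 and let (A,B) solve A' = -16αA/B², B' = 8 - 16α/B with 0 < B₀ < 2α, A₀ > 0. Then B is strictly decreasing, the maximal existence time t_max is finite, and A(t) → 0 and B(t) → 0 as t → t_max. -/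
open Set Filter Topology

/-!
On its own, `B` solves the autonomous equation `B' = 8 - 16α/B = 8(B - 2α)/B`, whose field is
negative below the equilibrium `2α`. Comparison with the constant `B₀` keeps `B ≤ B₀`, hence
`B' ≤ 8 - 16α/B₀ < 0`: `B` decreases at least linearly and would vanish before
`B₀²/(16α - 8B₀)`. The quantity `A(2α - B)/B` is a first integral, so `A = κB/(2α - B)` tends to
`0` with `B`. Finally, `B` has a limit at `t_max`; were it positive, the equation for `B`, with its
field truncated below that limit to make it globally Lipschitz, could be solved past `t_max`, and
together with `A := κB/(2α - B)` this would extend the solution, contradicting maximality.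
-/

theorem AntitoneOn.le_of_tendsto_nhdsLT {f : ℝ → ℝ} {a b L : ℝ} (hf : AntitoneOn f (Ico a b))
    (hL : Tendsto f (𝓝[<] b) (𝓝 L)) : ∀ t ∈ Ico a b, L ≤ f t := fun _ ht ↦
  le_of_tendsto hL <| mem_of_superset (Ioo_mem_nhdsLT ht.2) fun _ hs ↦
    hf ht ⟨ht.1.trans hs.1.le, hs.2⟩ hs.1.le

theorem AntitoneOn.exists_tendsto_nhdsLT {f : ℝ → ℝ} {a b m : ℝ} (hab : a < b)
    (hf : AntitoneOn f (Ico a b)) (hm : ∀ t ∈ Ico a b, m ≤ f t) :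
    ∃ L, m ≤ L ∧ Tendsto f (𝓝[<] b) (𝓝 L) := by
  have hne : (Ioo a b).Nonempty := nonempty_Ioo.2 hab
  have hm' : ∀ y ∈ f '' Ioo a b, m ≤ y := by
    rintro _ ⟨t, ht, rfl⟩
    exact hm t (Ioo_subset_Ico_self ht)
  exact ⟨_, le_csInf (hne.image f) hm',
    (hf.mono Ioo_subset_Ico_self).tendsto_nhdsWithin_Ioo_left hne ⟨m, hm'⟩⟩

open scoped NNReal in
theorem LipschitzWith.exists_eq_forall_mem_Ioo_hasDerivAt {E : Type*} [NormedAddCommGroup E]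
    [NormedSpace ℝ E] [CompleteSpace E] {f : E → E} {K : ℝ≥0} {M : ℝ} (hf : LipschitzWith K f)
    (hM : ∀ x, ‖f x‖ ≤ M) {a b t₀ : ℝ} (ht₀ : t₀ ∈ Icc a b) (x₀ : E) :
    ∃ γ : ℝ → E, γ t₀ = x₀ ∧ ∀ t ∈ Ioo a b, HasDerivAt γ (f (γ t)) t := by
  lift M to ℝ≥0 using (norm_nonneg _).trans (hM x₀)
  have hpl : IsPicardLindelof (fun _ ↦ f) (⟨t₀, ht₀⟩ : Icc a b) x₀
      (M * (b - a).toNNReal) 0 M K := by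
    refine .of_time_independent (fun x _ ↦ hM x) hf.lipschitzOnWith ?_
    have : max (b - t₀) (t₀ - a) ≤ b - a := max_le (by linarith [ht₀.1]) (by linarith [ht₀.2])
    simpa [Real.coe_toNNReal _ (sub_nonneg.2 (ht₀.1.trans ht₀.2))] using
      mul_le_mul_of_nonneg_left this M.2
  obtain ⟨γ, hγ₀, hγ⟩ := hpl.exists_eq_forall_mem_Icc_hasDerivWithinAt₀
  exact ⟨γ, hγ₀, fun t ht ↦ (hγ t (Ioo_subset_Icc_self ht)).hasDerivAt (Icc_mem_nhds ht.1 ht.2)⟩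

theorem exists_lipschitzWith_sub_div_max (a k : ℝ) {c : ℝ} (hc : 0 < c) :
    ∃ K, LipschitzWith K fun b : ℝ ↦ a - k / max b c := by
  refine ⟨⟨|k| / c ^ 2, by positivity⟩, .of_dist_le_mul fun x y ↦ ?_⟩
  have hx : 0 < max x c := lt_max_of_lt_right hc
  have hy : 0 < max y c := lt_max_of_lt_right hc
  have hmax : |max x c - max y c| ≤ |x - y| := abs_max_sub_max_le_abs x y c
  calc dist (a - k / max x c) (a - k / max y c)
      = |k| * |max x c - max y c| / (max x c * max y c) := by
        rw [Real.dist_eq, show a - k / max x c - (a - k / max y c)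
          = k * (max x c - max y c) / (max x c * max y c) by field_simp; ring,
          abs_div, abs_mul, abs_of_pos (mul_pos hx hy)]
    _ ≤ |k| * |x - y| / (c * c) := by
        gcongr
        · exact le_max_right x c
        · exact le_max_right y c
    _ = |k| / c ^ 2 * dist x y := by rw [Real.dist_eq]; ring

theorem abs_sub_div_max_le (a k : ℝ) {c : ℝ} (hc : 0 < c) (b : ℝ) :
    |a - k / max b c| ≤ |a| + |k| / c := by
  have hb : 0 < max b c := lt_max_of_lt_right hc
  calc |a - k / max b c| ≤ |a| + |k| / max b c := by
        simpa only [abs_div, abs_of_pos hb] using abs_sub a (k / max b c)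
    _ ≤ |a| + |k| / c := by gcongr; exact le_max_right b c

section ScalarEquation

variable {α T : ℝ} {B : ℝ → ℝ}

theorem le_initial_of_hasDerivAt (hB : ∀ t ∈ Ico 0 T, HasDerivAt B (8 - 16 * α / B t) t)
    (h0 : 0 < B 0) (h2α : B 0 < 2 * α) : ∀ t ∈ Ico 0 T, B t ≤ B 0 := by
  intro t ht
  have hsub : Icc 0 t ⊆ Ico 0 T := fun s hs ↦ ⟨hs.1, hs.2.trans_lt ht.2⟩
  refine image_le_of_deriv_right_lt_deriv_boundary' (B := fun _ ↦ B 0)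
    (fun s hs ↦ (hB s (hsub hs)).continuousAt.continuousWithinAt)
    (fun s hs ↦ (hB s (hsub (Ico_subset_Icc_self hs))).hasDerivWithinAt) le_rfl
    continuousOn_const (fun s _ ↦ hasDerivWithinAt_const s _ (B 0)) (fun s _ hs ↦ ?_)
    ⟨ht.1, le_rfl⟩
  rw [hs, sub_neg, lt_div_iff₀ h0]
  linarith

theorem eight_sub_div_le_of_hasDerivAt (hB : ∀ t ∈ Ico 0 T, HasDerivAt B (8 - 16 * α / B t) t)
    (hpos : ∀ t ∈ Ico 0 T, 0 < B t) (h2α : B 0 < 2 * α) :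
    ∀ t ∈ Ico 0 T, 8 - 16 * α / B t ≤ -(16 * α / B 0 - 8) := by
  intro t ht
  have h0 := hpos 0 ⟨le_rfl, ht.1.trans_lt ht.2⟩
  have : 16 * α / B 0 ≤ 16 * α / B t := by
    gcongr
    · linarith
    · exact hpos t ht
    · exact le_initial_of_hasDerivAt hB h0 h2α t ht
  linarith

theorem strictAntiOn_of_hasDerivAt (hB : ∀ t ∈ Ico 0 T, HasDerivAt B (8 - 16 * α / B t) t)
    (hpos : ∀ t ∈ Ico 0 T, 0 < B t) (h2α : B 0 < 2 * α) : StrictAntiOn B (Ico 0 T) := by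
  refine strictAntiOn_of_hasDerivWithinAt_neg (f' := fun t ↦ 8 - 16 * α / B t) (convex_Ico 0 T)
    (fun t ht ↦ (hB t ht).continuousAt.continuousWithinAt) (fun t ht ↦ ?_) (fun t ht ↦ ?_)
  all_goals rw [interior_Ico] at ht
  · exact (hB t (Ioo_subset_Ico_self ht)).hasDerivWithinAt
  · have := eight_sub_div_le_of_hasDerivAt hB hpos h2α t (Ioo_subset_Ico_self ht)
    have h0 := hpos 0 ⟨le_rfl, ht.1.trans ht.2⟩
    have : 8 < 16 * α / B 0 := by rw [lt_div_iff₀ h0]; linarith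
    linarith

theorem le_sub_mul_of_hasDerivAt (hB : ∀ t ∈ Ico 0 T, HasDerivAt B (8 - 16 * α / B t) t)
    (hpos : ∀ t ∈ Ico 0 T, 0 < B t) (h2α : B 0 < 2 * α) :
    ∀ t ∈ Ico 0 T, B t ≤ B 0 - (16 * α / B 0 - 8) * t := by
  intro t ht
  have hsub : Icc 0 t ⊆ Ico 0 T := fun s hs ↦ ⟨hs.1, hs.2.trans_lt ht.2⟩
  have hline (s : ℝ) : HasDerivAt (fun s ↦ B 0 - (16 * α / B 0 - 8) * s)
      (-(16 * α / B 0 - 8)) s := by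
    simpa using ((hasDerivAt_id s).const_mul (16 * α / B 0 - 8)).const_sub (B 0)
  refine image_le_of_deriv_right_le_deriv_boundary
    (fun s hs ↦ (hB s (hsub hs)).continuousAt.continuousWithinAt)
    (fun s hs ↦ (hB s (hsub (Ico_subset_Icc_self hs))).hasDerivWithinAt) (by simp)
    (fun s _ ↦ (hline s).continuousAt.continuousWithinAt) (fun s _ ↦ (hline s).hasDerivWithinAt)
    (fun s hs ↦ eight_sub_div_le_of_hasDerivAt hB hpos h2α s (hsub (Ico_subset_Icc_self hs)))
    ⟨ht.1, le_rfl⟩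

theorem le_sq_div_of_hasDerivAt (hB : ∀ t ∈ Ico 0 T, HasDerivAt B (8 - 16 * α / B t) t)
    (hpos : ∀ t ∈ Ico 0 T, 0 < B t) (h0 : 0 < B 0) (h2α : B 0 < 2 * α) :
    T ≤ B 0 ^ 2 / (16 * α - 8 * B 0) := by
  have hc : 0 < 16 * α / B 0 - 8 := by rw [sub_pos, lt_div_iff₀ h0]; linarith
  have heq : B 0 ^ 2 / (16 * α - 8 * B 0) = B 0 / (16 * α / B 0 - 8) := by
    field_simp
  by_contra! hT
  have hmem : B 0 / (16 * α / B 0 - 8) ∈ Ico 0 T := ⟨by positivity, heq ▸ hT⟩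
  have := le_sub_mul_of_hasDerivAt hB hpos h2α _ hmem
  rw [mul_div_cancel₀ _ hc.ne', sub_self] at this
  exact (hpos _ hmem).not_ge this

theorem exists_truncated_continuation {c : ℝ}
    (hB : ∀ t ∈ Ico 0 T, HasDerivAt B (8 - 16 * α / B t) t) (hT : 0 < T) (hc : 0 < c)
    (hcB : ∀ t ∈ Ico 0 T, c ≤ B t) :
    ∃ β : ℝ → ℝ, (∀ t ∈ Ico 0 T, β t = B t) ∧
      ∀ t ∈ Ioo (-1) (T + 1), HasDerivAt β (8 - 16 * α / max (β t) c) t := by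
  obtain ⟨K, hK⟩ := exists_lipschitzWith_sub_div_max 8 (16 * α) hc
  obtain ⟨β, hβ0, hβ⟩ := hK.exists_eq_forall_mem_Ioo_hasDerivAt
    (abs_sub_div_max_le 8 (16 * α) hc) (a := -1) (b := T + 1) (t₀ := 0)
    ⟨by linarith, by linarith⟩ (B 0)
  refine ⟨β, fun t ht ↦ ?_, hβ⟩
  have hsub : Icc 0 t ⊆ Ico 0 T := fun s hs ↦ ⟨hs.1, hs.2.trans_lt ht.2⟩
  have hsub' : Icc 0 t ⊆ Ioo (-1) (T + 1) := fun s hs ↦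
    ⟨by linarith [hs.1], by linarith [hs.2, ht.2]⟩
  refine ODE_solution_unique (v := fun _ b ↦ 8 - 16 * α / max b c) (fun _ ↦ hK)
    (fun s hs ↦ (hβ s (hsub' hs)).continuousAt.continuousWithinAt)
    (fun s hs ↦ (hβ s (hsub' (Ico_subset_Icc_self hs))).hasDerivWithinAt)
    (fun s hs ↦ (hB s (hsub hs)).continuousAt.continuousWithinAt)
    (fun s hs ↦ ?_) hβ0 ⟨ht.1, le_rfl⟩
  have hs' := hsub (Ico_subset_Icc_self hs)
  rw [max_eq_left (hcB s hs')]
  exact (hB s hs').hasDerivWithinAt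

theorem exists_continuation_of_tendsto (hB : ∀ t ∈ Ico 0 T, HasDerivAt B (8 - 16 * α / B t) t)
    (hpos : ∀ t ∈ Ico 0 T, 0 < B t) (h2α : B 0 < 2 * α) (hT : 0 < T) {L : ℝ} (hL : 0 < L)
    (hBL : Tendsto B (𝓝[<] T) (𝓝 L)) :
    ∃ T' > T, ∃ β : ℝ → ℝ, (∀ t ∈ Ico 0 T, β t = B t) ∧
      ∀ t ∈ Ico 0 T', β t ∈ Ioo 0 (2 * α) ∧ HasDerivAt β (8 - 16 * α / β t) t := by
  have hT0 : (0 : ℝ) ∈ Ico 0 T := ⟨le_rfl, hT⟩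
  have hLB := (strictAntiOn_of_hasDerivAt hB hpos h2α).antitoneOn.le_of_tendsto_nhdsLT hBL
  have hBB0 := le_initial_of_hasDerivAt hB (hpos 0 hT0) h2α
  obtain ⟨β, hβB, hβ⟩ := exists_truncated_continuation hB hT (half_pos hL)
    fun t ht ↦ (half_le_self hL.le).trans (hLB t ht)
  have hβT : HasDerivAt β (8 - 16 * α / max (β T) (L / 2)) T := hβ T ⟨by linarith, by linarith⟩
  have hβTL : β T = L := tendsto_nhds_unique
    ((hβT.continuousAt.tendsto.mono_left nhdsWithin_le_nhds).congr'
      (mem_of_superset (Ico_mem_nhdsLT hT) hβB)) hBL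
  have hβTmem : β T ∈ Ioo (L / 2) (2 * α) := by
    rw [hβTL]
    exact ⟨half_lt_self hL, (hLB 0 hT0).trans_lt h2α⟩
  obtain ⟨l, u, hTlu, hlu⟩ := mem_nhds_iff_exists_Ioo_subset.1 <|
    hβT.continuousAt.preimage_mem_nhds (isOpen_Ioo.mem_nhds hβTmem)
  refine ⟨min u (T + 1), lt_min hTlu.2 (by linarith), β, hβB, fun t ht ↦ ?_⟩
  have hmem : β t ∈ Ioo (L / 2) (2 * α) := by
    rcases lt_or_ge t T with htT | htT
    · rw [hβB t ⟨ht.1, htT⟩]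
      exact ⟨(half_lt_self hL).trans_le (hLB t ⟨ht.1, htT⟩), (hBB0 t ⟨ht.1, htT⟩).trans_lt h2α⟩
    · exact hlu ⟨hTlu.1.trans_le htT, ht.2.trans_le (min_le_left _ _)⟩
  refine ⟨⟨(half_pos hL).trans hmem.1, hmem.2⟩, ?_⟩
  simpa only [max_eq_left hmem.1.le] using
    hβ t ⟨by linarith [ht.1], ht.2.trans_le (min_le_right _ _)⟩

end ScalarEquation

section FirstIntegral

variable {α t κ : ℝ} {A B : ℝ → ℝ}

theorem hasDerivAt_firstIntegral (hA : HasDerivAt A (-16 * α * A t / B t ^ 2) t)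
    (hB : HasDerivAt B (8 - 16 * α / B t) t) (hBt : B t ≠ 0) :
    HasDerivAt (fun s ↦ A s * (2 * α - B s) / B s) 0 t :=
  ((hA.fun_mul (hB.const_sub (2 * α))).div hB hBt).congr_deriv (by field_simp; ring)

theorem hasDerivAt_mul_div_two_mul_sub (hB : HasDerivAt B (8 - 16 * α / B t) t)
    (hpos : 0 < B t) (hlt : B t < 2 * α) :
    HasDerivAt (fun s ↦ κ * B s / (2 * α - B s))
      (-16 * α * (κ * B t / (2 * α - B t)) / B t ^ 2) t := by
  have hne : B t ≠ 0 := hpos.ne'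
  have : 2 * α - B t ≠ 0 := by linarith
  refine ((hB.const_mul κ).div (hB.const_sub (2 * α)) this).congr_deriv ?_
  rw [div_eq_div_iff (pow_ne_zero 2 this) (pow_ne_zero 2 hne)]
  field_simp
  ring

end FirstIntegral

def IsRG2Solution (α T : ℝ) (A B : ℝ → ℝ) : Prop :=
  ∀ t ∈ Ico (0 : ℝ) T, 0 < A t ∧ 0 < B t ∧
    HasDerivAt A (-16 * α * A t / B t ^ 2) t ∧ HasDerivAt B (8 - 16 * α / B t) t

namespace IsRG2Solution

variable {α T : ℝ} {A B : ℝ → ℝ}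

theorem hasDerivAt_B (h : IsRG2Solution α T A B) :
    ∀ t ∈ Ico 0 T, HasDerivAt B (8 - 16 * α / B t) t := fun t ht ↦ (h t ht).2.2.2

theorem pos_B (h : IsRG2Solution α T A B) : ∀ t ∈ Ico 0 T, 0 < B t := fun t ht ↦ (h t ht).2.1

theorem firstIntegral_eq (h : IsRG2Solution α T A B) :
    ∀ t ∈ Ico 0 T, A t * (2 * α - B t) / B t = A 0 * (2 * α - B 0) / B 0 := by
  intro t ht
  have hsub : Icc 0 t ⊆ Ico 0 T := fun s hs ↦ ⟨hs.1, hs.2.trans_lt ht.2⟩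
  have hd : ∀ s ∈ Icc 0 t, HasDerivAt (fun s ↦ A s * (2 * α - B s) / B s) 0 s := fun s hs ↦
    have ⟨_, hBs, hA', hB'⟩ := h s (hsub hs)
    hasDerivAt_firstIntegral hA' hB' hBs.ne'
  exact constant_of_has_deriv_right_zero (fun s hs ↦ (hd s hs).continuousAt.continuousWithinAt)
    (fun s hs ↦ (hd s (Ico_subset_Icc_self hs)).hasDerivWithinAt) t ⟨ht.1, le_rfl⟩

theorem eq_mul_div (h : IsRG2Solution α T A B) (h2α : B 0 < 2 * α) :
    ∀ t ∈ Ico 0 T, A t = A 0 * (2 * α - B 0) / B 0 * B t / (2 * α - B t) := by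
  intro t ht
  have hB := h.pos_B t ht
  have hlt : B t < 2 * α := (le_initial_of_hasDerivAt h.hasDerivAt_B
    (h.pos_B 0 ⟨le_rfl, ht.1.trans_lt ht.2⟩) h2α t ht).trans_lt h2α
  rw [← h.firstIntegral_eq t ht]
  have : 2 * α - B t ≠ 0 := by linarith
  field_simp

theorem tendsto_A (h : IsRG2Solution α T A B) (hT : 0 < T) (h2α : B 0 < 2 * α)
    (hB : Tendsto B (𝓝[<] T) (𝓝 0)) : Tendsto A (𝓝[<] T) (𝓝 0) := by
  have hα : 2 * α ≠ 0 := by linarith [h.pos_B 0 ⟨le_rfl, hT⟩]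
  have hEq : (fun t ↦ A 0 * (2 * α - B 0) / B 0 * B t / (2 * α - B t)) =ᶠ[𝓝[<] T] A :=
    mem_of_superset (Ico_mem_nhdsLT hT) fun t ht ↦ (h.eq_mul_div h2α t ht).symm
  have := (hB.const_mul (A 0 * (2 * α - B 0) / B 0)).div (hB.const_sub (2 * α))
    (by simpa using hα)
  simpa using this.congr' hEq

theorem exists_extension (h : IsRG2Solution α T A B) (hT : 0 < T) (h2α : B 0 < 2 * α) {L : ℝ}
    (hL : 0 < L) (hBL : Tendsto B (𝓝[<] T) (𝓝 L)) :
    ∃ T' A' B', T < T' ∧ (∀ t ∈ Ico 0 T, A' t = A t ∧ B' t = B t) ∧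
      IsRG2Solution α T' A' B' := by
  obtain ⟨T', hT', β, hβB, hβ⟩ :=
    exists_continuation_of_tendsto h.hasDerivAt_B h.pos_B h2α hT hL hBL
  obtain ⟨hA0, hB0, -⟩ := h 0 ⟨le_rfl, hT⟩
  have hκ : 0 < A 0 * (2 * α - B 0) / B 0 := div_pos (mul_pos hA0 (by linarith)) hB0
  refine ⟨T', fun s ↦ A 0 * (2 * α - B 0) / B 0 * β s / (2 * α - β s), β, hT',
    fun t ht ↦ ⟨?_, hβB t ht⟩, fun t ht ↦ ?_⟩
  · simp only [hβB t ht]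
    exact (h.eq_mul_div h2α t ht).symm
  · obtain ⟨⟨hβpos, hlt⟩, hβ'⟩ := hβ t ht
    exact ⟨div_pos (mul_pos hκ hβpos) (sub_pos.2 hlt), hβpos,
      hasDerivAt_mul_div_two_mul_sub hβ' hβpos hlt, hβ'⟩

end IsRG2Solution

theorem rg2_sol_shrinker_case_general
    (α B₀ tmax : ℝ)
    (hB₀2 : B₀ < 2*α) (htmax : 0 < tmax)
    (A B : ℝ → ℝ) (hB0 : B 0 = B₀)
    (hsol : ∀ t ∈ Ico (0:ℝ) tmax, 0 < A t ∧ 0 < B t ∧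
      HasDerivAt A (-16*α*(A t)/(B t)^2) t ∧
      HasDerivAt B (8 - 16*α/(B t)) t)
    (hmaximal : ¬ ∃ (T' : ℝ) (A' B' : ℝ → ℝ), tmax < T' ∧
      (∀ t ∈ Ico (0:ℝ) tmax, A' t = A t ∧ B' t = B t) ∧
      ∀ t ∈ Ico (0:ℝ) T', 0 < A' t ∧ 0 < B' t ∧
        HasDerivAt A' (-16*α*(A' t)/(B' t)^2) t ∧
        HasDerivAt B' (8 - 16*α/(B' t)) t) :
    StrictAntiOn B (Ico (0:ℝ) tmax) ∧
    tmax ≤ B₀^2/(16*α - 8*B₀) ∧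
    Tendsto A (nhdsWithin tmax (Iio tmax)) (nhds 0) ∧
    Tendsto B (nhdsWithin tmax (Iio tmax)) (nhds 0) := by
  subst hB0
  have hsol : IsRG2Solution α tmax A B := hsol
  have hanti := strictAntiOn_of_hasDerivAt hsol.hasDerivAt_B hsol.pos_B hB₀2
  obtain ⟨L, hL0, hBL⟩ :=
    hanti.antitoneOn.exists_tendsto_nhdsLT htmax fun t ht ↦ (hsol.pos_B t ht).le
  obtain rfl : L = 0 := by
    by_contra hL
    exact hmaximal (hsol.exists_extension htmax hB₀2 (hL0.lt_of_ne' hL) hBL)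
  exact ⟨hanti, le_sq_div_of_hasDerivAt hsol.hasDerivAt_B hsol.pos_B
    (hsol.pos_B 0 ⟨le_rfl, htmax⟩) hB₀2, hsol.tendsto_A htmax hB₀2 hBL, hBL⟩

/-- For the LRS Sol RG-2 system `A' = -16αA/B²`, `B' = 8 - 16α/B` with
`0 < B₀ < 2α`, `A₀ > 0`: `B` is strictly decreasing, the maximal existence time
is finite (bounded by `B₀²/(16α - 8B₀)`), and `A(t) → 0`, `B(t) → 0` as
`t → t_max`. -/
theorem rg2_sol_shrinker_case
    (α A₀ B₀ tmax : ℝ) (hα : 0 < α) (hA₀ : 0 < A₀) (hB₀ : 0 < B₀)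
    (hB₀2 : B₀ < 2*α) (htmax : 0 < tmax)
    (A B : ℝ → ℝ) (hA0 : A 0 = A₀) (hB0 : B 0 = B₀)
    (hsol : ∀ t ∈ Ico (0:ℝ) tmax, 0 < A t ∧ 0 < B t ∧
      HasDerivAt A (-16*α*(A t)/(B t)^2) t ∧
      HasDerivAt B (8 - 16*α/(B t)) t)
    (hmaximal : ¬ ∃ (T' : ℝ) (A' B' : ℝ → ℝ), tmax < T' ∧
      (∀ t ∈ Ico (0:ℝ) tmax, A' t = A t ∧ B' t = B t) ∧
      ∀ t ∈ Ico (0:ℝ) T', 0 < A' t ∧ 0 < B' t ∧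
        HasDerivAt A' (-16*α*(A' t)/(B' t)^2) t ∧
        HasDerivAt B' (8 - 16*α/(B' t)) t) :
    StrictAntiOn B (Ico (0:ℝ) tmax) ∧
    tmax ≤ B₀^2/(16*α - 8*B₀) ∧
    Tendsto A (nhdsWithin tmax (Iio tmax)) (nhds 0) ∧
    Tendsto B (nhdsWithin tmax (Iio tmax)) (nhds 0) :=
  rg2_sol_shrinker_case_general α B₀ tmax hB₀2 htmax A B hB0 hsol hmaximal
end
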